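/- For all x, y ∈ ℂ, a · 𝓕₂⁽¹⁾(a + 1, b₁, b₂; c₁, c₂; t₁, t₂, k₁, k₂, x, y) = a · 𝓕₂⁽¹⁾(a, b₁, b₂; c₁, c₂; t₁, t₂, k₁, k₂, x, y) + x · ∂/∂x 𝓕₂⁽¹⁾(a, b₁, b₂; c₁, c₂; t₁, t₂, k₁, k₂, x, y) + y · ∂/∂y 𝓕₂⁽¹⁾(a, b₁, b₂; c₁, c₂; t₁, t₂, k₁, k₂, x, y), where ∂/∂x and ∂/∂y denote the partial derivatives of the polynomial function (x,y) ↦ 𝓕₂⁽¹⁾(a,…,x,y). (This is the contiguous relation a𝓕₂⁽¹⁾(a+1) = (a + θ + φ)𝓕₂⁽¹⁾ with θ = x∂/∂x, φ = y∂/∂y.) -/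

import Mathlib

open Complex Finset

/-- Ascending Pochhammer symbol `(z)_j = z (z+1) ⋯ (z+j−1)`, with `(z)_0 = 1`. -/
noncomputable def poch (z : ℂ) (j : ℕ) : ℂ := (ascPochhammer ℂ j).eval z

/-- The first discrete Appell function `𝓕₂⁽¹⁾(a,b₁,b₂;c₁,c₂;t₁,t₂,k₁,k₂,x,y)`.
Since `(−t₁)_{m k₁} = 0` once `m k₁ > t₁` and `(−t₂)_{n k₂} = 0` once `n k₂ > t₂`
(for `k₁, k₂ ≥ 1`), the doubly infinite sum reduces to this finite sum. -/
noncomputable def F2one (a b₁ b₂ c₁ c₂ : ℂ) (t₁ t₂ k₁ k₂ : ℕ) (x y : ℂ) : ℂ :=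
  ∑ m ∈ Finset.range (t₁ + 1), ∑ n ∈ Finset.range (t₂ + 1),
    poch a (m + n) * poch b₁ m * poch b₂ n * (-1 : ℂ) ^ (m * k₁) * poch (-(t₁ : ℂ)) (m * k₁)
      * (-1 : ℂ) ^ (n * k₂) * poch (-(t₂ : ℂ)) (n * k₂) * x ^ m * y ^ n
    / (poch c₁ m * poch c₂ n * (Nat.factorial m : ℂ) * (Nat.factorial n : ℂ))

/-!
Write `𝓕₂⁽¹⁾(a) = ∑ C_{m,n}(a) xᵐ yⁿ`. The Euler operators `θ = x ∂/∂x` and `φ = y ∂/∂y` act on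
the monomial `xᵐ yⁿ` by multiplication with `m` and `n`, while `a (a+1)_{m+n} = (a+m+n) (a)_{m+n}`
gives `a C_{m,n}(a+1) = (a+m+n) C_{m,n}(a)`; the relation holds coefficientwise.
-/

theorem mul_poch_add_one (z : ℂ) (j : ℕ) : z * poch (z + 1) j = (z + j) * poch z j := by
  have hleft := congrArg (Polynomial.eval z) (ascPochhammer_succ_left (S := ℂ) j)
  simp only [Polynomial.eval_mul, Polynomial.eval_comp, Polynomial.eval_add, Polynomial.eval_X,
    Polynomial.eval_one] at hleft
  rw [poch, poch, ← hleft, ascPochhammer_succ_eval, mul_comm]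

theorem mul_deriv_sum_monomial {𝕜 ι : Type*} [NontriviallyNormedField 𝕜] (s : Finset ι)
    (c : ι → 𝕜) (p : ι → ℕ) (x : 𝕜) :
    x * deriv (fun z => ∑ i ∈ s, c i * z ^ p i) x = ∑ i ∈ s, p i * (c i * x ^ p i) := by
  have hderiv : HasDerivAt (fun z => ∑ i ∈ s, c i * z ^ p i)
      (∑ i ∈ s, c i * (p i * x ^ (p i - 1))) x :=
    HasDerivAt.fun_sum fun i _ => (hasDerivAt_pow (p i) x).const_mul (c i)
  rw [hderiv.deriv, mul_sum]
  refine sum_congr rfl fun i _ => ?_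
  rcases Nat.eq_zero_or_pos (p i) with hp | hp
  · simp [hp]
  · rw [← mul_pow_sub_one hp.ne' x]
    ring

section F2one

variable (a b₁ b₂ c₁ c₂ : ℂ) (t₁ t₂ k₁ k₂ : ℕ)

noncomputable def F2oneCoeff (m n : ℕ) : ℂ :=
  poch a (m + n) * poch b₁ m * poch b₂ n * (-1 : ℂ) ^ (m * k₁) * poch (-(t₁ : ℂ)) (m * k₁)
      * (-1 : ℂ) ^ (n * k₂) * poch (-(t₂ : ℂ)) (n * k₂)
    / (poch c₁ m * poch c₂ n * (Nat.factorial m : ℂ) * (Nat.factorial n : ℂ))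

theorem F2one_eq_sum_coeff (x y : ℂ) :
    F2one a b₁ b₂ c₁ c₂ t₁ t₂ k₁ k₂ x y =
      ∑ q ∈ range (t₁ + 1) ×ˢ range (t₂ + 1),
        F2oneCoeff a b₁ b₂ c₁ c₂ t₁ t₂ k₁ k₂ q.1 q.2 * x ^ q.1 * y ^ q.2 := by
  rw [sum_product, F2one]
  refine sum_congr rfl fun m _ => sum_congr rfl fun n _ => ?_
  rw [F2oneCoeff]
  ring

theorem mul_F2oneCoeff_add_one (m n : ℕ) :
    a * F2oneCoeff (a + 1) b₁ b₂ c₁ c₂ t₁ t₂ k₁ k₂ m n =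
      (a + m + n) * F2oneCoeff a b₁ b₂ c₁ c₂ t₁ t₂ k₁ k₂ m n := by
  have hpoch := mul_poch_add_one a (m + n)
  push_cast at hpoch
  simp only [F2oneCoeff, mul_div_assoc']
  congr 1
  linear_combination (poch b₁ m * poch b₂ n * (-1 : ℂ) ^ (m * k₁) * poch (-(t₁ : ℂ)) (m * k₁)
      * (-1 : ℂ) ^ (n * k₂) * poch (-(t₂ : ℂ)) (n * k₂)) * hpoch

theorem mul_deriv_F2one_fst (x y : ℂ) :
    x * deriv (fun s => F2one a b₁ b₂ c₁ c₂ t₁ t₂ k₁ k₂ s y) x =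
      ∑ q ∈ range (t₁ + 1) ×ˢ range (t₂ + 1),
        q.1 * (F2oneCoeff a b₁ b₂ c₁ c₂ t₁ t₂ k₁ k₂ q.1 q.2 * x ^ q.1 * y ^ q.2) := by
  have hpoly : (fun s => F2one a b₁ b₂ c₁ c₂ t₁ t₂ k₁ k₂ s y) = fun s =>
      ∑ q ∈ range (t₁ + 1) ×ˢ range (t₂ + 1),
        (F2oneCoeff a b₁ b₂ c₁ c₂ t₁ t₂ k₁ k₂ q.1 q.2 * y ^ q.2) * s ^ q.1 := by
    funext s
    rw [F2one_eq_sum_coeff]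
    exact sum_congr rfl fun q _ => mul_right_comm _ _ _
  rw [hpoly, mul_deriv_sum_monomial]
  exact sum_congr rfl fun q _ => by ring

theorem mul_deriv_F2one_snd (x y : ℂ) :
    y * deriv (fun s => F2one a b₁ b₂ c₁ c₂ t₁ t₂ k₁ k₂ x s) y =
      ∑ q ∈ range (t₁ + 1) ×ˢ range (t₂ + 1),
        q.2 * (F2oneCoeff a b₁ b₂ c₁ c₂ t₁ t₂ k₁ k₂ q.1 q.2 * x ^ q.1 * y ^ q.2) := by
  have hpoly : (fun s => F2one a b₁ b₂ c₁ c₂ t₁ t₂ k₁ k₂ x s) = fun s =>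
      ∑ q ∈ range (t₁ + 1) ×ˢ range (t₂ + 1),
        (F2oneCoeff a b₁ b₂ c₁ c₂ t₁ t₂ k₁ k₂ q.1 q.2 * x ^ q.1) * s ^ q.2 := by
    funext s
    rw [F2one_eq_sum_coeff]
  rw [hpoly, mul_deriv_sum_monomial]

end F2one

theorem contiguous_relation_a_up_general (a b₁ b₂ c₁ c₂ : ℂ) (k₁ k₂ : ℕ)
    (t₁ t₂ : ℕ) (x y : ℂ) :
    a * F2one (a + 1) b₁ b₂ c₁ c₂ t₁ t₂ k₁ k₂ x y =
      a * F2one a b₁ b₂ c₁ c₂ t₁ t₂ k₁ k₂ x y +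
        x * deriv (fun s : ℂ => F2one a b₁ b₂ c₁ c₂ t₁ t₂ k₁ k₂ s y) x +
        y * deriv (fun s : ℂ => F2one a b₁ b₂ c₁ c₂ t₁ t₂ k₁ k₂ x s) y := by
  rw [mul_deriv_F2one_fst, mul_deriv_F2one_snd, F2one_eq_sum_coeff, F2one_eq_sum_coeff, mul_sum,
    mul_sum, ← sum_add_distrib, ← sum_add_distrib]
  refine sum_congr rfl fun q _ => ?_
  rw [← mul_assoc, ← mul_assoc, mul_F2oneCoeff_add_one]
  ring

/-- The contiguous relation `a 𝓕₂⁽¹⁾(a+1) = (a + θ + φ) 𝓕₂⁽¹⁾`, with `θ = x ∂/∂x`,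
`φ = y ∂/∂y`. -/
theorem contiguous_relation_a_up (a b₁ b₂ c₁ c₂ : ℂ) (k₁ k₂ : ℕ)
    (hk₁ : 0 < k₁) (hk₂ : 0 < k₂)
    (hc₁ : ∀ n : ℕ, c₁ ≠ -(n : ℂ)) (hc₂ : ∀ n : ℕ, c₂ ≠ -(n : ℂ))
    (t₁ t₂ : ℕ) (x y : ℂ) :
    a * F2one (a + 1) b₁ b₂ c₁ c₂ t₁ t₂ k₁ k₂ x y =
      a * F2one a b₁ b₂ c₁ c₂ t₁ t₂ k₁ k₂ x y +
        x * deriv (fun s : ℂ => F2one a b₁ b₂ c₁ c₂ t₁ t₂ k₁ k₂ s y) x +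
        y * deriv (fun s : ℂ => F2one a b₁ b₂ c₁ c₂ t₁ t₂ k₁ k₂ x s) y :=
  contiguous_relation_a_up_general a b₁ b₂ c₁ c₂ k₁ k₂ t₁ t₂ x y
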